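/- Let p ≥ 3 be an odd integer and let M₁ be the (p-1)×(p-1) real symmetric matrix with diagonal entries (M₁)ᵢᵢ = 2 for 1 ≤ i ≤ (p-1)/2, (M₁)ᵢᵢ = 0 for (p-1)/2 < i ≤ p-1, and off-diagonal entries (M₁)ᵢ_k = 1 for all i ≠ k. Then the characteristic polynomial of M₁ is (X+1)^{(p-3)/2} (X-1)^{(p-3)/2} (X² - (p-1)X - 1) in ℝ[X]. In particular, -1 and 1 are eigenvalues of M₁ each with multiplicity (p-3)/2, and the remaining two eigenvalues are the two real roots of t² - (p-1)t - 1 = 0, which have opposite signs. -/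

import Mathlib

/-!
Write `M₁ = D + 𝟙𝟙ᵀ` with `D` diagonal with entries `1` (`m = (p - 1)/2` times) and `-1`
(`m` times). Then `X - M₁` is a diagonal matrix plus a rank-one matrix, and over the field `ℝ(X)`,
where the diagonal is invertible, the matrix determinant lemma gives
`det (X - M₁) = (X - 1)ᵐ (X + 1)ᵐ (1 - m/(X - 1) - m/(X + 1))`,
which simplifies to the stated product since `2m = p - 1`. The quadratic factor has constant
term `-1 < 0`, so its two real roots have opposite signs.
-/

open Polynomial

/-- The matrix `M₁`: diagonal entries `2` in the first `(p-1)/2` slots, `0` afterwards,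
and off-diagonal entries all `1`. -/
noncomputable def Mone (p : ℕ) : Matrix (Fin (p - 1)) (Fin (p - 1)) ℝ :=
  Matrix.of fun i k => if i = k then (if (i : ℕ) < (p - 1) / 2 then (2 : ℝ) else 0) else 1

open Matrix

section
variable {ι : Type*} [Fintype ι] [DecidableEq ι]

theorem det_diagonal_add_vecMulVec {K : Type*} [Field K] {d : ι → K} (hd : ∀ i, d i ≠ 0)
    (u v : ι → K) : (diagonal d + vecMulVec u v).det = (∏ i, d i) * (1 + ∑ i, v i * u i / d i) := by
  have hu : diagonal d *ᵥ (u / d) = u := funext fun i => by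
    rw [mulVec_diagonal, Pi.div_apply, mul_div_cancel₀ _ (hd i)]
  have : diagonal d + vecMulVec u v = diagonal d * (1 + vecMulVec (u / d) v) := by
    rw [Matrix.mul_add, Matrix.mul_one, mul_vecMulVec, hu]
  rw [this, det_mul, det_diagonal, vecMulVec_eq Unit, det_one_add_replicateCol_mul_replicateRow]
  simp [dotProduct, mul_div_assoc]

theorem RatFunc.X_sub_C_ne_zero {K : Type*} [Field K] (a : K) :
    (RatFunc.X - RatFunc.C a : RatFunc K) ≠ 0 := by
  simpa [RatFunc.algebraMap_X, RatFunc.algebraMap_C] using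
    RatFunc.algebraMap_ne_zero (Polynomial.X_sub_C_ne_zero a)

theorem algebraMap_charpoly_diagonal_add_vecMulVec {K : Type*} [Field K] (e u v : ι → K) :
    algebraMap K[X] (RatFunc K) (diagonal e + vecMulVec u v).charpoly =
      (∏ i, (RatFunc.X - RatFunc.C (e i))) *
        (1 - ∑ i, RatFunc.C (v i * u i) / (RatFunc.X - RatFunc.C (e i))) := by
  have hmap : (charmatrix (diagonal e + vecMulVec u v)).map (algebraMap K[X] (RatFunc K)) =
      diagonal (fun i => RatFunc.X - RatFunc.C (e i)) +
        vecMulVec (fun i => -RatFunc.C (u i)) (fun i => RatFunc.C (v i)) := by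
    ext i j
    by_cases h : i = j
    · subst h
      simp only [map_apply, charmatrix_apply_eq, Matrix.add_apply, diagonal_apply_eq,
        vecMulVec_apply, map_add, map_mul, map_sub, RatFunc.algebraMap_X, RatFunc.algebraMap_C]
      ring
    · simp [h, vecMulVec_apply, RatFunc.algebraMap_C]
  rw [charpoly, RingHom.map_det, RingHom.mapMatrix_apply, hmap,
    det_diagonal_add_vecMulVec fun i => RatFunc.X_sub_C_ne_zero (e i)]
  simp [neg_div, sub_eq_add_neg]
end

@[to_additive]
theorem Fin.prod_ite_val_lt {M : Type*} [CommMonoid M] {n m : ℕ} (h : m ≤ n) (a b : M) :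
    ∏ i : Fin n, (if (i : ℕ) < m then a else b) = a ^ m * b ^ (n - m) := by
  rw [Finset.prod_ite, Finset.prod_const, Finset.prod_const, Fin.card_filter_val_lt,
    Finset.filter_not, Finset.card_univ_sdiff, Fin.card_filter_val_lt, Fintype.card_fin,
    min_eq_right h]

theorem exists_neg_pos_roots_sq_sub_mul_sub_one (b : ℝ) :
    ∃ t₁ t₂ : ℝ, t₁ < 0 ∧ 0 < t₂ ∧ t₁ ^ 2 - b * t₁ - 1 = 0 ∧ t₂ ^ 2 - b * t₂ - 1 = 0 := by
  set s := √(b ^ 2 + 4)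
  have hs : s ^ 2 = b ^ 2 + 4 := Real.sq_sqrt (by positivity)
  have hb : |b| < s := abs_lt_of_sq_lt_sq (by linarith) (Real.sqrt_nonneg _)
  obtain ⟨hb₁, hb₂⟩ := abs_lt.mp hb
  exact ⟨(b - s) / 2, (b + s) / 2, by linarith, by linarith, by linarith, by linarith⟩

theorem Mone_eq_diagonal_add_vecMulVec (p : ℕ) :
    Mone p = diagonal (fun i : Fin (p - 1) => if (i : ℕ) < (p - 1) / 2 then (1 : ℝ) else -1) +
      vecMulVec 1 1 := by
  ext i j
  by_cases h : i = j
  · subst h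
    simp only [Mone, of_apply, ↓reduceIte, Matrix.add_apply, diagonal_apply_eq, vecMulVec_apply,
      Pi.one_apply, mul_one]
    split_ifs <;> norm_num
  · simp [Mone, h]

theorem Mone_charpoly (p : ℕ) (hp : 3 ≤ p) (hpodd : Odd p) :
    (Mone p).charpoly =
        (X + 1) ^ ((p - 3) / 2) * (X - 1) ^ ((p - 3) / 2) *
          (X ^ 2 - C ((p : ℝ) - 1) * X - 1) ∧
      ∃ t₁ t₂ : ℝ, t₁ < 0 ∧ 0 < t₂ ∧
        t₁ ^ 2 - ((p : ℝ) - 1) * t₁ - 1 = 0 ∧ t₂ ^ 2 - ((p : ℝ) - 1) * t₂ - 1 = 0 := by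
  refine ⟨?_, exists_neg_pos_roots_sq_sub_mul_sub_one _⟩
  obtain ⟨m, rfl⟩ := hpodd
  obtain ⟨k, rfl⟩ : ∃ k, m = k + 1 := ⟨m - 1, by omega⟩
  apply RatFunc.algebraMap_injective ℝ
  rw [Mone_eq_diagonal_add_vecMulVec, algebraMap_charpoly_diagonal_add_vecMulVec]
  simp only [apply_ite, Pi.one_apply, mul_one, map_one, map_neg]
  rw [Fin.prod_ite_val_lt (by omega), Fin.sum_ite_val_lt (by omega)]
  have hm : (2 * (k + 1) + 1 - 1) / 2 = k + 1 := by omega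
  have hm' : 2 * (k + 1) + 1 - 1 - (k + 1) = k + 1 := by omega
  have hk : (2 * (k + 1) + 1 - 3) / 2 = k := by omega
  have hx₁ : (RatFunc.X - 1 : RatFunc ℝ) ≠ 0 := by simpa using RatFunc.X_sub_C_ne_zero (1 : ℝ)
  have hx₂ : (RatFunc.X + 1 : RatFunc ℝ) ≠ 0 := by simpa using RatFunc.X_sub_C_ne_zero (-1 : ℝ)
  rw [hm, hm', hk]
  simp only [map_mul, map_pow, map_sub, map_add, map_one, map_natCast, RatFunc.algebraMap_X,
    nsmul_eq_mul, sub_neg_eq_add]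
  push_cast
  field_simp
  ring
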